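/- For every prime p and every nonzero polynomial f ∈ ℤ[t], the image of f in ℤ_p[[t^ℤ̂]] is not a zero-divisor: if g ∈ ℤ_p[[t^ℤ̂]] satisfies f·g = 0, then g = 0. -/

import Mathlib

open Polynomial

set_option synthInstance.maxHeartbeats 1000000
set_option maxHeartbeats 1000000

noncomputable section
noncomputable section

/-- The ring of profinite integers `ẐZ = lim_n ℤ/nℤ`, realized as the subring of
`∏ n : ℕ+, ZMod n` consisting of families compatible under the natural projections. -/
def ZHatSubring : Subring (∀ n : ℕ+, ZMod n) where
  carrier := {f | ∀ (m n : ℕ+) (h : (m : ℕ) ∣ (n : ℕ)), ZMod.castHom h (ZMod m) (f n) = f m}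
  mul_mem' := fun {a b} ha hb m n h => by
    simp only [Pi.mul_apply, map_mul, ha m n h, hb m n h]
  one_mem' := fun m n h => map_one _
  add_mem' := fun {a b} ha hb m n h => by
    simp only [Pi.add_apply, map_add, ha m n h, hb m n h]
  zero_mem' := fun m n h => map_zero _
  neg_mem' := fun {a} ha m n h => by
    simp only [Pi.neg_apply, map_neg, ha m n h]

/-- The profinite integers as a type. -/
abbrev ZHat : Type := ZHatSubring

instance : CommRing ZHat := inferInstance

/-- The quotient ring `R[t]/(tⁿ - 1)`. -/
abbrev CycModN (R : Type) [CommRing R] (n : ℕ+) : Type :=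
  Polynomial R ⧸ Ideal.span {(X : Polynomial R) ^ (n : ℕ) - 1}

lemma X_pow_sub_one_dvd {R : Type} [CommRing R] {m n : ℕ} (h : m ∣ n) :
    (X : Polynomial R) ^ m - 1 ∣ (X : Polynomial R) ^ n - 1 := by
  obtain ⟨k, rfl⟩ := h
  simpa [pow_mul] using sub_dvd_pow_sub_pow ((X : Polynomial R) ^ m) 1 k

/-- The natural transition map `R[t]/(tⁿ-1) → R[t]/(tᵐ-1)` for `m ∣ n`. -/
def cycTransition (R : Type) [CommRing R] {m n : ℕ+} (h : (m : ℕ) ∣ (n : ℕ)) :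
    CycModN R n →+* CycModN R m :=
  Ideal.Quotient.factor
    (Ideal.span_singleton_le_span_singleton.mpr (X_pow_sub_one_dvd h))

/-- The completed group ring `R[[t^Ẑ]] = lim_n R[t]/(tⁿ-1)`, realized as the subring of
`∏ n : ℕ+, R[t]/(tⁿ-1)` of families compatible under the transition maps. -/
def CompletedCycRing (R : Type) [CommRing R] : Subring (∀ n : ℕ+, CycModN R n) where
  carrier := {f | ∀ (m n : ℕ+) (h : (m : ℕ) ∣ (n : ℕ)), cycTransition R h (f n) = f m}
  mul_mem' := fun {a b} ha hb m n h => by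
    simp only [Pi.mul_apply, map_mul, ha m n h, hb m n h]
  one_mem' := fun m n h => map_one _
  add_mem' := fun {a b} ha hb m n h => by
    simp only [Pi.add_apply, map_add, ha m n h, hb m n h]
  zero_mem' := fun m n h => map_zero _
  neg_mem' := fun {a} ha m n h => by
    simp only [Pi.neg_apply, map_neg, ha m n h]

instance completedCycRingCommRing (R : Type) [CommRing R] :
    CommRing (CompletedCycRing R) := inferInstance

/-- The natural ring homomorphism `R[t] → R[[t^Ẑ]]`, `f ↦ (f mod (tⁿ-1))ₙ`. -/
def polyToCompleted (R : Type) [CommRing R] : Polynomial R →+* CompletedCycRing R :=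
  RingHom.codRestrict (Pi.ringHom fun n => Ideal.Quotient.mk _) _
    (fun f m n h => by
      simp [cycTransition, Pi.ringHom_apply]
      exact Ideal.Quotient.factor_mk _ f)

/-- The natural ring homomorphism `ℤ[t] → R[[t^Ẑ]]`. -/
def intPolyEmb (R : Type) [CommRing R] : Polynomial ℤ →+* CompletedCycRing R :=
  (polyToCompleted R).comp (Polynomial.mapRingHom (Int.castRingHom R))


/-!
Fix a level `n`. Over `ℚ_p`, the degree of `gcd(f, tᵐ - 1)` is bounded by `deg f`, so along the
multiples `m` of a suitable multiple `n₁` of `n` this gcd is a constant monic `c`; by Gauss's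
lemma `c` is the image of a monic divisor `C` of `t^n₁ - 1` over `ℤ_p`. For `m = n₁ N` we have
`tᵐ - 1 = C · E · B` with `t^n₁ - 1 = C · E` and `B = ∑_{i<N} t^(n₁ i)`, and since
`gcd(f, tᵐ - 1) = c`, a lift `G` of `g_m` with `tᵐ - 1 ∣ f G` is divisible by `E · B`.
As `B ≡ N mod t^n₁ - 1`, the component `g_n₁` is divisible by every `N`, in particular by every
`pᵏ`, so it vanishes by Krull's intersection theorem for the finite `ℤ_p`-module
`ℤ_p[t]/(t^n₁ - 1)`; hence so does `g_n`.
-/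

theorem dvd_of_dvd_mul_of_gcd_mul_eq {α : Type*} [CommMonoidWithZero α] [GCDMonoid α]
    {F G P Q : α} (hP : P ≠ 0) (hPQ : gcd F P * Q = P) (hFG : P ∣ F * G) : Q ∣ G := by
  have hgcd : gcd F P ≠ 0 := fun h => hP ((gcd_eq_zero_iff F P).mp h).2
  refine (mul_dvd_mul_iff_left hgcd).mp ?_
  rw [hPQ]
  exact (dvd_gcd hFG (dvd_mul_right P G)).trans (gcd_mul_right' G F P).dvd

theorem Polynomial.dvd_of_dvd_mul_of_gcd_map_eq {R K : Type*} [CommRing R] [Field K]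
    [DecidableEq K] {φ : R →+* K} (hφ : Function.Injective φ) {F G C Q : R[X]} (hC : C.Monic)
    (hCQ : (C * Q).Monic) (hgcd : gcd (F.map φ) ((C * Q).map φ) = C.map φ)
    (hFG : C * Q ∣ F * G) : Q ∣ G := by
  refine (map_dvd_map φ hφ (hC.of_mul_monic_left hCQ)).mp
    (dvd_of_dvd_mul_of_gcd_mul_eq (F := F.map φ) (hCQ.map φ).ne_zero ?_ ?_)
  · rw [hgcd, Polynomial.map_mul]
  · simpa only [Polynomial.map_mul] using Polynomial.map_dvd φ hFG

theorem Polynomial.monic_gcd_of_ne_zero_right {K : Type*} [Field K] [DecidableEq K]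
    (F : K[X]) {G : K[X]} (hG : G ≠ 0) : (gcd F G).Monic := by
  rw [← normalize_gcd]
  exact monic_normalize fun h => hG ((gcd_eq_zero_iff F G).mp h).2

theorem Polynomial.monic_X_pow_sub_one {R : Type*} [CommRing R] (n : ℕ+) :
    (X ^ (n : ℕ) - 1 : R[X]).Monic := by
  simpa using monic_X_pow_sub_C (1 : R) n.ne_zero

theorem exists_gcd_X_pow_sub_one_eq_of_dvd {K : Type*} [Field K] [DecidableEq K] {F : K[X]}
    (hF : F ≠ 0) (n : ℕ+) : ∃ n₁ : ℕ+, (n : ℕ) ∣ n₁ ∧ ∀ m : ℕ+, (n₁ : ℕ) ∣ m →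
      gcd F (X ^ (m : ℕ) - 1) = gcd F (X ^ (n₁ : ℕ) - 1) := by
  set d : {m : ℕ+ // (n : ℕ) ∣ m} → ℕ := fun m => (gcd F (X ^ (m.1 : ℕ) - 1)).natDegree
  have hbdd : BddAbove (Set.range d) :=
    ⟨F.natDegree, by rintro - ⟨m, rfl⟩; exact natDegree_le_of_dvd (gcd_dvd_left _ _) hF⟩
  obtain ⟨⟨n₁, hn₁⟩, hmax⟩ := Nat.sSup_mem ⟨_, Set.mem_range_self ⟨n, dvd_rfl⟩⟩ hbdd
  refine ⟨n₁, hn₁, fun m hm => eq_of_monic_of_dvd_of_natDegree_le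
    (monic_gcd_of_ne_zero_right _ (monic_X_pow_sub_one _).ne_zero)
    (monic_gcd_of_ne_zero_right _ (monic_X_pow_sub_one _).ne_zero)
    (dvd_gcd (gcd_dvd_left _ _) ((gcd_dvd_right _ _).trans (dvd_pow_sub_one_of_dvd hm))) ?_⟩
  exact (le_csSup hbdd ⟨⟨m, hn₁.trans hm⟩, rfl⟩).trans hmax.ge

theorem CycModN.mk_geom_sum_X_pow {R : Type} [CommRing R] (n : ℕ+) (N : ℕ) :
    (Ideal.Quotient.mk _ (∑ i ∈ Finset.range N, (X ^ (n : ℕ)) ^ i) : CycModN R n) = N := by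
  have hX : (Ideal.Quotient.mk _ (X ^ (n : ℕ)) : CycModN R n) = 1 :=
    (Ideal.Quotient.mk_eq_mk_iff_sub_mem _ _).mpr (Ideal.mem_span_singleton_self _)
  simp [hX]

theorem CycModN.eq_zero_of_forall_pow_dvd {R : Type} [CommRing R] [IsNoetherianRing R]
    [IsLocalRing R] {a : R} (ha : a ∈ IsLocalRing.maximalIdeal R) {n : ℕ+} {x : CycModN R n}
    (hx : ∀ k : ℕ, algebraMap R (CycModN R n) a ^ k ∣ x) : x = 0 := by
  have := (monic_X_pow_sub_one (R := R) n).finite_quotient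
  have hI : Ideal.span {a} ≠ ⊤ := fun h => (IsLocalRing.maximalIdeal.isMaximal R).ne_top
    (top_le_iff.mp (h ▸ Ideal.span_le.mpr (Set.singleton_subset_iff.mpr ha)))
  rw [← Submodule.mem_bot R, ← Ideal.iInf_pow_smul_eq_bot_of_isLocalRing _ hI, Submodule.mem_iInf]
  intro k
  obtain ⟨y, rfl⟩ := hx k
  rw [← map_pow, ← Algebra.smul_def, Ideal.span_singleton_pow]
  exact Submodule.smul_mem_smul (Ideal.mem_span_singleton_self _) Submodule.mem_top

theorem exists_monic_map_eq_gcd_dvd {R : Type*} (K : Type*) [CommRing R] [IsDomain R]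
    [IsIntegrallyClosed R] [Field K] [Algebra R K] [IsFractionRing R K] [DecidableEq K]
    {P : R[X]} (hP : P.Monic) (F : K[X]) :
    ∃ C : R[X], C.Monic ∧ C.map (algebraMap R K) = gcd F (P.map (algebraMap R K)) ∧ C ∣ P := by
  have hinj : Function.Injective (algebraMap R K) := IsFractionRing.injective R K
  have hc := monic_gcd_of_ne_zero_right F (hP.map (algebraMap R K)).ne_zero
  obtain ⟨C, hCc⟩ := IsIntegrallyClosed.eq_map_mul_C_of_dvd K hP (gcd_dvd_right F _)
  rw [hc.leadingCoeff, map_one, mul_one] at hCc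
  have hC : C.Monic := monic_of_injective hinj (hCc ▸ hc)
  exact ⟨C, hC, hCc, (map_dvd_map _ hinj hC).mp (hCc ▸ gcd_dvd_right _ _)⟩

@[simp]
theorem cycTransition_mk {R : Type} [CommRing R] {m n : ℕ+} (h : (m : ℕ) ∣ (n : ℕ)) (G : R[X]) :
    cycTransition R h (Ideal.Quotient.mk _ G) = Ideal.Quotient.mk _ G :=
  Ideal.Quotient.factor_mk _ G

theorem CompletedCycRing.natCast_dvd_apply_of_gcd_eq {R K : Type} [CommRing R] [IsDomain R]
    [IsIntegrallyClosed R] [Field K] [Algebra R K] [IsFractionRing R K] [DecidableEq K]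
    {F : R[X]} {g : CompletedCycRing R} (hFg : polyToCompleted R F * g = 0) {n : ℕ+}
    (hgcd : ∀ m : ℕ+, (n : ℕ) ∣ m → gcd (F.map (algebraMap R K)) (X ^ (m : ℕ) - 1) =
      gcd (F.map (algebraMap R K)) (X ^ (n : ℕ) - 1)) (N : ℕ+) :
    (N : CycModN R n) ∣ g.1 n := by
  have hinj : Function.Injective (algebraMap R K) := IsFractionRing.injective R K
  have hmap (k : ℕ+) : (X ^ (k : ℕ) - 1 : R[X]).map (algebraMap R K) = X ^ (k : ℕ) - 1 := by
    simp
  obtain ⟨C, hC, hCc, E, hE⟩ := exists_monic_map_eq_gcd_dvd K (monic_X_pow_sub_one (R := R) n)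
    (F.map (algebraMap R K))
  rw [hmap] at hCc
  set B : R[X] := ∑ i ∈ Finset.range N, (X ^ (n : ℕ)) ^ i
  have hfactor : X ^ ((n * N : ℕ+) : ℕ) - 1 = C * (E * B) := by
    rw [← mul_assoc, ← hE, mul_geom_sum, ← pow_mul, PNat.mul_coe]
  obtain ⟨G, hG⟩ := Ideal.Quotient.mk_surjective (g.1 (n * N))
  have hFG : X ^ ((n * N : ℕ+) : ℕ) - 1 ∣ F * G := by
    rw [← Ideal.mem_span_singleton, ← Ideal.Quotient.eq_zero_iff_mem, map_mul, hG]
    exact congrFun (congrArg Subtype.val hFg) (n * N)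
  obtain ⟨H, rfl⟩ : E * B ∣ G := by
    refine dvd_of_dvd_mul_of_gcd_map_eq hinj hC (hfactor ▸ monic_X_pow_sub_one _) ?_
      (hfactor ▸ hFG)
    rw [← hfactor, hmap, hgcd _ (dvd_mul_right _ _), hCc]
  have hgn : g.1 n = Ideal.Quotient.mk _ (E * B * H) := by
    rw [← g.2 n (n * N) (dvd_mul_right _ _), ← hG]
    exact cycTransition_mk _ _
  rw [hgn, map_mul, map_mul, CycModN.mk_geom_sum_X_pow]
  exact dvd_mul_of_dvd_left (dvd_mul_left _ _) _

/-- For every prime `p` and every nonzero `f ∈ ℤ[t]`, the image of `f` in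
`ℤ_p[[t^Ẑ]]` is not a zero-divisor. -/
theorem int_poly_not_zeroDivisor_in_padic_completed_group_ring
    (p : ℕ) [Fact p.Prime] (f : Polynomial ℤ) (hf : f ≠ 0)
    (g : CompletedCycRing (PadicInt p))
    (hfg : intPolyEmb (PadicInt p) f * g = 0) : g = 0 := by
  classical
  have hF : (f.map (Int.castRingHom ℤ_[p])).map (algebraMap ℤ_[p] ℚ_[p]) ≠ 0 := by
    rw [Polynomial.map_map]
    exact (Polynomial.map_ne_zero_iff (RingHom.injective_int _)).mpr hf
  have hp : (p : ℤ_[p]) ∈ IsLocalRing.maximalIdeal ℤ_[p] := by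
    rw [PadicInt.maximalIdeal_eq_span_p]
    exact Ideal.mem_span_singleton_self _
  refine Subtype.ext (funext fun n => ?_)
  obtain ⟨n₁, hn, hstab⟩ := exists_gcd_X_pow_sub_one_eq_of_dvd hF n
  have hg₁ : g.1 n₁ = 0 := CycModN.eq_zero_of_forall_pow_dvd hp fun k => by
    rw [map_natCast, ← Nat.cast_pow]
    exact CompletedCycRing.natCast_dvd_apply_of_gcd_eq hfg hstab
      ⟨p ^ k, pow_pos (Fact.out : p.Prime).pos k⟩
  rw [← g.2 n n₁ hn, hg₁, map_zero]
  rfl
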